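/- arXiv:1503.01344 — 3 statements merged into one kernel-verified Lean document; each statement's English description precedes it below -/
import Mathlib

section
/- Let X be a normed space, let a be an element of the closed unit ball of X, let e be an extreme point of the closed unit ball, and let β > 1 be a real number. If ‖β•a − e‖ < β − 1, then there exists y in the open unit ball of X such that a = (1/β)•e + (1 − 1/β)•y. -/
/-- If `a` is in the closed unit ball of a normed space `X` (over `ℝ` or `ℂ`),
`e` is an extreme point of the closed unit ball, `β > 1` and `‖β•a − e‖ < β - 1`,
then there is `y` in the open unit ball with `a = (1/β)•e + (1 − 1/β)•y`. -/
theorem stmt0 {𝕜 : Type*} [RCLike 𝕜] {X : Type*} [NormedAddCommGroup X]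
    [NormedSpace ℝ X] [NormedSpace 𝕜 X] (a e : X) (β : ℝ)
    (ha : ‖a‖ ≤ 1)
    (he : e ∈ Set.extremePoints ℝ (Metric.closedBall (0 : X) 1))
    (hβ : 1 < β)
    (h : ‖β • a - e‖ < β - 1) :
    ∃ y : X, ‖y‖ < 1 ∧ a = (1 / β) • e + (1 - 1 / β) • y := by
  have hβ0 : (0:ℝ) < β := lt_trans one_pos hβ
  have hb1 : (0:ℝ) < β - 1 := by linarith
  refine ⟨(β - 1)⁻¹ • (β • a - e), ?_, ?_⟩
  · rw [norm_smul, Real.norm_eq_abs, abs_of_pos (inv_pos.mpr hb1)]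
    rw [inv_mul_lt_one₀ hb1]
    exact h
  · rw [smul_smul]
    have : (1 - 1 / β) * (β - 1)⁻¹ = 1 / β := by
      field_simp
    rw [this, smul_sub, one_div, smul_smul, inv_mul_cancel₀ hβ0.ne', one_smul]
    abel
end

section
/- Let A be a C*-algebra and a ∈ A. Then the left conorm γ(a) := γ(L_a), where L_a(x) = a x and γ denotes the reduced minimum modulus, satisfies γ(a)² = inf( σ(a a*) \ {0} ) whenever a a* has nonzero spectrum, where σ denotes the spectrum. -/
/-- The left conorm of an element `a` of a C*-algebra: the reduced minimum modulus of
the left multiplication operator `L_a : x ↦ a * x`. -/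
noncomputable def leftConorm {A : Type*} [NormedRing A] (a : A) : ℝ :=
  sInf ((fun x => ‖a * x‖) '' {x : A | 1 ≤ Metric.infDist x {y : A | a * y = 0}})

/-!
Write `c = a⋆a`. Since `σ(aa⋆) \ {0} = σ(c) \ {0}`, `‖a x‖² = ‖x⋆ c x‖`, and `L_a`, `L_c` have
the same kernel, everything is read off the functional calculus of `c`.

If `t₀ ∈ σ(c)`, `t₀ > 0`, a tent function `f` at `t₀` of width `δ < t₀` vanishes near `0`, so
`e = f(c)` annihilates `ker L_c`; the C⋆-identity then gives `dist(e, ker L_a) ≥ ‖e‖ ≥ 1`, while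
`‖a e‖² = ‖e c e‖ ≤ t₀ + δ`. Conversely, if `σ(c) ⊆ {0} ∪ [m, ∞)` with `m > 0`, then
`q = g(c)` with `g t = t / max t m` satisfies `c q = c` and `q² ≤ c / m`; hence `x - q x ∈ ker L_a`
and `1 ≤ ‖q x‖² ≤ ‖a x‖² / m` whenever `dist(x, ker L_a) ≥ 1`.
-/

open Metric

noncomputable def tent (t₀ δ t : ℝ) : ℝ := max 0 (1 - |t - t₀| / δ)

section tent

variable {t₀ δ : ℝ}

@[fun_prop]
lemma continuous_tent (t₀ δ : ℝ) : Continuous (tent t₀ δ) := by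
  unfold tent; fun_prop

lemma tent_self : tent t₀ δ t₀ = 1 := by simp [tent]

lemma tent_nonneg (t : ℝ) : 0 ≤ tent t₀ δ t := le_max_left _ _

lemma tent_le_one (hδ : 0 < δ) (t : ℝ) : tent t₀ δ t ≤ 1 :=
  max_le zero_le_one (sub_le_self _ (by positivity))

lemma tent_eq_zero (hδ : 0 < δ) {t : ℝ} (ht : δ ≤ |t - t₀|) : tent t₀ δ t = 0 :=
  max_eq_left (sub_nonpos.2 ((one_le_div hδ).2 ht))

end tent

section leftConorm

variable {A : Type*} [NormedRing A]

lemma leftConorm_nonneg (a : A) : 0 ≤ leftConorm a :=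
  Real.sInf_nonneg (by rintro _ ⟨x, -, rfl⟩; exact norm_nonneg _)

lemma leftConorm_le_norm_mul {a x : A} (hx : 1 ≤ infDist x {y | a * y = 0}) :
    leftConorm a ≤ ‖a * x‖ :=
  csInf_le ⟨0, by rintro _ ⟨y, -, rfl⟩; exact norm_nonneg _⟩ ⟨x, hx, rfl⟩

lemma le_leftConorm_sq {a : A} {r : ℝ} (hne : ∃ x, 1 ≤ infDist x {y | a * y = 0})
    (h : ∀ x, 1 ≤ infDist x {y | a * y = 0} → r ≤ ‖a * x‖ ^ 2) : r ≤ leftConorm a ^ 2 := by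
  have hsqrt : √r ≤ leftConorm a := by
    obtain ⟨x, hx⟩ := hne
    refine le_csInf ⟨_, x, hx, rfl⟩ ?_
    rintro _ ⟨x, hx, rfl⟩
    exact Real.sqrt_le_iff.2 ⟨norm_nonneg _, h x hx⟩
  exact (Real.sqrt_le_iff.1 hsqrt).2

end leftConorm

section CStarRing

variable {A : Type*} [NonUnitalNormedRing A] [StarRing A] [CStarRing A]

lemma norm_mul_sq_eq_norm_star_mul (a x : A) :
    ‖a * x‖ ^ 2 = ‖star x * (star a * a * x)‖ := by
  rw [sq, ← CStarRing.norm_star_mul_self, star_mul, mul_assoc, mul_assoc]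

lemma mul_eq_zero_iff_star_mul_self_mul_eq_zero {a y : A} :
    a * y = 0 ↔ star a * a * y = 0 := by
  refine ⟨fun h => by rw [mul_assoc, h, mul_zero], fun h => ?_⟩
  rw [← norm_eq_zero, ← sq_eq_zero_iff, norm_mul_sq_eq_norm_star_mul, h, mul_zero, norm_zero]

lemma norm_le_infDist_of_star_mul_eq_zero {e : A} {s : Set A} (hs : s.Nonempty)
    (h : ∀ y ∈ s, star e * y = 0) : ‖e‖ ≤ infDist e s := by
  refine (le_infDist hs).2 fun y hy => ?_
  have : ‖e‖ * ‖e‖ ≤ ‖e‖ * dist e y := calc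
    ‖e‖ * ‖e‖ = ‖star e * (e - y)‖ := by
      rw [mul_sub, h y hy, sub_zero, CStarRing.norm_star_mul_self]
    _ ≤ ‖e‖ * dist e y := by
      rw [dist_eq_norm, ← norm_star e]; exact norm_mul_le _ _
  rcases (norm_nonneg e).eq_or_lt with he | he
  · rw [← he]; exact dist_nonneg
  · exact le_of_mul_le_mul_left this he

end CStarRing

section CStarAlgebra

variable {A : Type*} [CStarAlgebra A]

lemma cfc_mul_eq_zero_of_mul_eq_zero {c y : A} (hc : IsSelfAdjoint c) (hcy : c * y = 0)
    {f : ℝ → ℝ} (hf : Continuous f) {r : ℝ} (hr : 0 < r) (hfr : ∀ t < r, f t = 0) :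
    cfc f c * y = 0 := by
  have hmax : ∀ t, 0 < max t r := fun t => hr.trans_le (le_max_right _ _)
  have hfactor : f = fun t => f t / max t r * t := by
    funext t
    rcases lt_or_ge t r with ht | ht
    · simp [hfr t ht]
    · rw [max_eq_left ht, div_mul_cancel₀ _ (hr.trans_le ht).ne']
  have hk : Continuous fun t => f t / max t r :=
    hf.div (continuous_id.max continuous_const) fun t => (hmax t).ne'
  rw [hfactor, cfc_mul _ _ c hk.continuousOn, cfc_id' ℝ c, mul_assoc, hcy, mul_zero]

lemma setOf_ofReal_mem_spectrum_mul_star (a : A) :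
    {t : ℝ | (t : ℂ) ∈ spectrum ℂ (a * star a) ∧ t ≠ 0} = spectrum ℝ (star a * a) \ {0} := by
  ext t
  have hswap := congrArg ((t : ℂ) ∈ ·) (spectrum.nonzero_mul_comm a (star a))
  simp only [Set.mem_sdiff, Set.mem_singleton_iff, Complex.ofReal_eq_zero, eq_iff_iff] at hswap
  rw [Set.mem_ofPred_eq, Set.mem_sdiff, Set.mem_singleton_iff, hswap,
    ← spectrum.algebraMap_mem_iff ℂ (r := t)]
  rfl

lemma exists_one_le_infDist_norm_mul_sq_le (a : A) {t₀ δ : ℝ}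
    (ht₀ : t₀ ∈ spectrum ℝ (star a * a)) (hδ : 0 < δ) (hδt₀ : δ < t₀) :
    ∃ x, 1 ≤ infDist x {y | a * y = 0} ∧ ‖a * x‖ ^ 2 ≤ t₀ + δ := by
  set c := star a * a
  have hc : IsSelfAdjoint c := .star_mul_self a
  have he : IsSelfAdjoint (cfc (tent t₀ δ) c) := cfc_predicate _ _
  refine ⟨cfc (tent t₀ δ) c, ?_, ?_⟩
  · have hnorm : 1 ≤ ‖cfc (tent t₀ δ) c‖ := by
      simpa [tent_self] using norm_apply_le_norm_cfc (tent t₀ δ) c ht₀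
    refine hnorm.trans (norm_le_infDist_of_star_mul_eq_zero ⟨0, mul_zero a⟩ fun y hy => ?_)
    rw [he.star_eq]
    refine cfc_mul_eq_zero_of_mul_eq_zero hc (mul_eq_zero_iff_star_mul_self_mul_eq_zero.1 hy)
      (continuous_tent t₀ δ) (sub_pos.2 hδt₀) fun t ht => tent_eq_zero hδ ?_
    rw [abs_sub_comm, abs_of_pos (by linarith)]
    linarith
  · have hcfc : star (cfc (tent t₀ δ) c) * (c * cfc (tent t₀ δ) c)
        = cfc (fun t => tent t₀ δ t * (t * tent t₀ δ t)) c := by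
      rw [he.star_eq, cfc_mul _ (fun t => t * tent t₀ δ t) c,
        cfc_mul (fun t => t) (tent t₀ δ) c, cfc_id' ℝ c]
    rw [norm_mul_sq_eq_norm_star_mul, hcfc]
    refine norm_cfc_le (by linarith) fun t ht => ?_
    have ht0 := spectrum_star_mul_self_nonneg t ht
    rcases le_or_gt δ |t - t₀| with hfar | hnear
    · rw [tent_eq_zero hδ hfar, zero_mul, norm_zero]; linarith
    · have hle : t ≤ t₀ + δ := by linarith [le_abs_self (t - t₀)]
      have h0 : 0 ≤ tent t₀ δ t := tent_nonneg t
      have h1 : tent t₀ δ t ≤ 1 := tent_le_one hδ t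
      rw [Real.norm_of_nonneg (by positivity)]
      calc tent t₀ δ t * (t * tent t₀ δ t) ≤ 1 * (t * 1) := by gcongr
        _ ≤ t₀ + δ := by linarith

lemma leftConorm_sq_le_of_mem_spectrum (a : A) {t : ℝ} (ht : t ∈ spectrum ℝ (star a * a))
    (ht0 : 0 < t) : leftConorm a ^ 2 ≤ t := by
  refine le_of_forall_pos_le_add fun ε hε => ?_
  obtain ⟨x, hx, hax⟩ := exists_one_le_infDist_norm_mul_sq_le a ht
    (lt_min hε (half_pos ht0)) ((min_le_right _ _).trans_lt (half_lt_self ht0))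
  calc leftConorm a ^ 2 ≤ ‖a * x‖ ^ 2 := by
        gcongr; exacts [leftConorm_nonneg a, leftConorm_le_norm_mul hx]
    _ ≤ t + min ε (t / 2) := hax
    _ ≤ t + ε := by gcongr; exact min_le_left _ _

end CStarAlgebra

section StarOrderedRing

variable {A : Type*} [CStarAlgebra A] [PartialOrder A] [StarOrderedRing A]

lemma continuous_div_max {m : ℝ} (hm : 0 < m) : Continuous fun t : ℝ => t / max t m :=
  continuous_id.div (continuous_id.max continuous_const) fun _ =>
    (hm.trans_le (le_max_right _ _)).ne'

lemma cfc_div_max_mul_self_le {c : A} (hc : 0 ≤ c) {m : ℝ} (hm : 0 < m) :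
    cfc (fun t => t / max t m) c * cfc (fun t => t / max t m) c ≤ m⁻¹ • c := by
  have hg := continuous_div_max hm
  calc cfc (fun t => t / max t m) c * cfc (fun t => t / max t m) c
        = cfc (fun t => t / max t m * (t / max t m)) c :=
      (cfc_mul _ _ c hg.continuousOn hg.continuousOn).symm
    _ ≤ cfc (fun t => m⁻¹ * t) c := by
      refine cfc_mono (fun t ht => ?_) (hg.mul hg).continuousOn (by fun_prop)
      have ht0 : 0 ≤ t := spectrum_nonneg_of_nonneg hc ht
      have h1 : t / max t m ≤ 1 :=
        div_le_one_of_le₀ (le_max_left _ _) (ht0.trans (le_max_left _ _))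
      have h2 : t / max t m ≤ m⁻¹ * t := by
        rw [inv_mul_eq_div]; exact div_le_div_of_nonneg_left ht0 hm (le_max_right _ _)
      calc t / max t m * (t / max t m) ≤ 1 * (m⁻¹ * t) := by gcongr
        _ = m⁻¹ * t := one_mul _
    _ = m⁻¹ • c := by rw [cfc_const_mul m⁻¹ (fun t => t) c, cfc_id' ℝ c]

lemma le_norm_mul_sq_of_spectrum_gap (a : A) {m : ℝ} (hm : 0 < m)
    (hgap : ∀ t ∈ spectrum ℝ (star a * a), t = 0 ∨ m ≤ t) {x : A}
    (hx : 1 ≤ infDist x {y | a * y = 0}) : m ≤ ‖a * x‖ ^ 2 := by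
  set c := star a * a
  set q := cfc (fun t : ℝ => t / max t m) c
  have hq : IsSelfAdjoint q := cfc_predicate _ _
  have hcq : c * q = c := calc
    c * q = cfc (fun t => t * (t / max t m)) c := by
      rw [cfc_mul (fun t => t) _ c continuousOn_id (continuous_div_max hm).continuousOn,
        cfc_id' ℝ c]
    _ = cfc (fun t => t) c := cfc_congr fun t ht => by
      rcases hgap t ht with rfl | hmt
      · simp
      · rw [max_eq_left hmt, div_self (hm.trans_le hmt).ne', mul_one]
    _ = c := cfc_id' ℝ c
  have hker : x - q * x ∈ {y | a * y = 0} := by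
    rw [Set.mem_ofPred_eq, mul_eq_zero_iff_star_mul_self_mul_eq_zero, mul_sub, ← mul_assoc, hcq,
      sub_self]
  have hqx : 1 ≤ ‖q * x‖ := by
    refine hx.trans ((infDist_le_dist_of_mem hker).trans_eq ?_)
    rw [dist_eq_norm, sub_sub_cancel]
  have hsq : ‖q * x‖ ^ 2 ≤ m⁻¹ * ‖a * x‖ ^ 2 := calc
    ‖q * x‖ ^ 2 = ‖star x * (q * q) * x‖ := by
      rw [norm_mul_sq_eq_norm_star_mul, hq.star_eq, mul_assoc (star x)]
    _ ≤ ‖star x * (m⁻¹ • c) * x‖ := CStarAlgebra.norm_le_norm_of_nonneg_of_le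
      (star_left_conjugate_nonneg hq.mul_self_nonneg x)
      (star_left_conjugate_le_conjugate (cfc_div_max_mul_self_le (star_mul_self_nonneg a) hm) x)
    _ = m⁻¹ * ‖a * x‖ ^ 2 := by
      rw [norm_mul_sq_eq_norm_star_mul, mul_smul_comm, smul_mul_assoc, norm_smul,
        Real.norm_of_nonneg (inv_nonneg.2 hm.le), mul_assoc]
  simpa using (le_inv_mul_iff₀ hm).1 ((one_le_pow₀ hqx).trans hsq)

lemma leftConorm_sq_eq_sInf_spectrum (a : A) (h : (spectrum ℝ (star a * a) \ {0}).Nonempty) :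
    leftConorm a ^ 2 = sInf (spectrum ℝ (star a * a) \ {0}) := by
  have hpos : ∀ t ∈ spectrum ℝ (star a * a) \ {0}, 0 < t := fun t ht =>
    (spectrum_star_mul_self_nonneg t ht.1).lt_of_ne' ht.2
  obtain ⟨t₀, ht₀⟩ := h
  refine le_antisymm
    (le_csInf ⟨t₀, ht₀⟩ fun t ht => leftConorm_sq_le_of_mem_spectrum a ht.1 (hpos t ht)) ?_
  set m := sInf (spectrum ℝ (star a * a) \ {0})
  have hgap : ∀ t ∈ spectrum ℝ (star a * a), t = 0 ∨ m ≤ t := fun t ht =>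
    or_iff_not_imp_left.2 fun ht0 => csInf_le ⟨0, fun s hs => (hpos s hs).le⟩ ⟨ht, ht0⟩
  obtain hm | hm := (show 0 ≤ m from Real.sInf_nonneg fun t ht => (hpos t ht).le).eq_or_lt
  · rw [← hm]; positivity
  · obtain ⟨x, hx, -⟩ := exists_one_le_infDist_norm_mul_sq_le a ht₀.1
      (half_pos (hpos t₀ ht₀)) (half_lt_self (hpos t₀ ht₀))
    exact le_leftConorm_sq ⟨x, hx⟩ fun x hx => le_norm_mul_sq_of_spectrum_gap a hm hgap hx

end StarOrderedRing

/-- In a C*-algebra `A`, the left conorm satisfies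
`γ(a)² = inf (σ(a a*) \ {0})` whenever `a a*` has nonzero spectrum. -/
theorem stmt4 {A : Type*} [NormedRing A] [StarRing A] [CStarRing A]
    [NormedAlgebra ℂ A] [CompleteSpace A] [StarModule ℂ A] (a : A)
    (h : {t : ℝ | (t : ℂ) ∈ spectrum ℂ (a * star a) ∧ t ≠ 0}.Nonempty) :
    (leftConorm a) ^ 2 = sInf {t : ℝ | (t : ℂ) ∈ spectrum ℂ (a * star a) ∧ t ≠ 0} := by
  let _ : CStarAlgebra A := { }
  let _ := CStarAlgebra.spectralOrder A
  let _ := CStarAlgebra.spectralOrderedRing A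
  rw [setOf_ofReal_mem_spectrum_mul_star] at h ⊢
  exact leftConorm_sq_eq_sInf_spectrum a h
end

section
/- Let E be a JB*-triple, assumed extremally rich (BP quasi-invertible elements dense), with nonempty set of extreme points of the closed unit ball, and assume the distance formula dist(x, ∂ₑ(E₁)) = max{1, ‖x‖ − 1} for all x ∉ E_q^{-1}. Then for every a in the open unit ball of E with a ∉ E_q^{-1}, and every t < 1/2, there exist an extreme point e of the closed unit ball and y with ‖y‖ < 1 such that a = t•e + (1−t)•y; hence λ(a) ≥ 1/2. -/
/-- A JB*-triple: a complex Banach space with a triple product, linear and symmetric in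
the outer variables, conjugate linear in the middle variable, satisfying the Jordan
identity and the norm conditions `‖{x,y,z}‖ ≤ ‖x‖‖y‖‖z‖` and `‖{x,x,x}‖ = ‖x‖³`. -/
class JBTriple (E : Type*) [NormedAddCommGroup E] [NormedSpace ℂ E] where
  tp : E → E → E → E
  add_left : ∀ x x' y z, tp (x + x') y z = tp x y z + tp x' y z
  smul_left : ∀ (c : ℂ) x y z, tp (c • x) y z = c • tp x y z
  symm_outer : ∀ x y z, tp x y z = tp z y x
  add_mid : ∀ x y y' z, tp x (y + y') z = tp x y z + tp x y' z
  conj_smul_mid : ∀ (c : ℂ) x y z, tp x (c • y) z = (starRingEnd ℂ) c • tp x y z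
  jordan : ∀ x y a b c, tp x y (tp a b c)
      = tp (tp x y a) b c - tp a (tp y x b) c + tp a b (tp x y c)
  norm_tp_le : ∀ x y z, ‖tp x y z‖ ≤ ‖x‖ * ‖y‖ * ‖z‖
  norm_tp_cube : ∀ x, ‖tp x x x‖ = ‖x‖ ^ 3

/-- The Bergmann operator `B(x,y) = Id − 2 L(x,y) + Q(x)Q(y)` applied to `z`. -/
def bergmann {E : Type*} [NormedAddCommGroup E] [NormedSpace ℂ E] [JBTriple E]
    (x y z : E) : E :=
  z - 2 • JBTriple.tp x y z + JBTriple.tp x (JBTriple.tp y z y) x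

/-- Brown–Pedersen quasi-invertibility. -/
def BPQuasiInv {E : Type*} [NormedAddCommGroup E] [NormedSpace ℂ E] [JBTriple E]
    (a : E) : Prop :=
  ∃ b : E, ∀ z : E, bergmann a b z = 0

/-- The Aron–Lohman λ-function. -/
noncomputable def lambdaFn {X : Type*} [NormedAddCommGroup X] [NormedSpace ℝ X]
    (a : X) : ℝ :=
  sSup {t : ℝ | t ∈ Set.Ioc (0 : ℝ) 1 ∧
    ∃ e ∈ Set.extremePoints ℝ (Metric.closedBall (0 : X) 1),
      ∃ y : X, ‖y‖ ≤ 1 ∧ a = t • e + (1 - t) • y}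

section Aux

variable {E : Type*} [NormedAddCommGroup E] [NormedSpace ℂ E] [JBTriple E]

lemma tp_real_smul_left (β : ℝ) (x y z : E) :
    JBTriple.tp (β • x) y z = β • JBTriple.tp x y z := by
  rw [← Complex.coe_smul, JBTriple.smul_left, Complex.coe_smul]

lemma tp_real_smul_right (β : ℝ) (x y z : E) :
    JBTriple.tp x y (β • z) = β • JBTriple.tp x y z := by
  rw [JBTriple.symm_outer, tp_real_smul_left, JBTriple.symm_outer z y x]

lemma tp_real_smul_mid (β : ℝ) (x y z : E) :
    JBTriple.tp x (β • y) z = β • JBTriple.tp x y z := by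
  rw [← Complex.coe_smul, JBTriple.conj_smul_mid, Complex.conj_ofReal, Complex.coe_smul]

lemma bergmann_real_smul (β : ℝ) (a b z : E) :
    bergmann a (β • b) z = bergmann (β • a) b z := by
  simp only [bergmann, tp_real_smul_left, tp_real_smul_mid, tp_real_smul_right, smul_smul]

lemma not_bpqi_smul {a : E} (haq : ¬ BPQuasiInv a) (β : ℝ) : ¬ BPQuasiInv (β • a) := by
  rintro ⟨b, hb⟩
  exact haq ⟨β • b, fun z => (bergmann_real_smul β a b z).trans (hb z)⟩

end Aux

/-- in an extremally rich JB*-triple with nonempty set of extreme points of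
the closed unit ball, assuming the distance formula
`dist(x, ∂ₑ(E₁)) = max{1, ‖x‖ − 1}` for `x ∉ E_q⁻¹`: for every `a` in the open unit ball
with `a` not BP quasi-invertible and every `0 < t < 1/2` there are an extreme point `e`
of the closed unit ball and `y` with `‖y‖ < 1` such that `a = t•e + (1−t)•y`; hence
`λ(a) ≥ 1/2`. -/
theorem stmt16 {E : Type*} [NormedAddCommGroup E] [NormedSpace ℂ E] [JBTriple E]
    (hrich : Dense {x : E | BPQuasiInv x})
    (hext : (Set.extremePoints ℝ (Metric.closedBall (0 : E) 1)).Nonempty)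
    (hdist : ∀ x : E, ¬ BPQuasiInv x →
      Metric.infDist x (Set.extremePoints ℝ (Metric.closedBall (0 : E) 1))
        = max 1 (‖x‖ - 1))
    (a : E) (ha : ‖a‖ < 1) (haq : ¬ BPQuasiInv a) :
    (∀ t : ℝ, 0 < t → t < 1 / 2 →
      ∃ e ∈ Set.extremePoints ℝ (Metric.closedBall (0 : E) 1),
        ∃ y : E, ‖y‖ < 1 ∧ a = t • e + (1 - t) • y) ∧
      (1 / 2 : ℝ) ≤ lambdaFn a := by
  have main : ∀ t : ℝ, 0 < t → t < 1 / 2 →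
      ∃ e ∈ Set.extremePoints ℝ (Metric.closedBall (0 : E) 1),
        ∃ y : E, ‖y‖ < 1 ∧ a = t • e + (1 - t) • y := by
    intro t ht ht2
    set β : ℝ := t⁻¹ with hβdef
    have htinv : t * β = 1 := mul_inv_cancel₀ ht.ne'
    have hβ2 : 2 < β := by
      have h2 : (0:ℝ) < β := inv_pos.mpr ht
      nlinarith
    have hβa : ¬ BPQuasiInv (β • a) := not_bpqi_smul haq β
    have hnorm : ‖β • a‖ = β * ‖a‖ := by
      rw [norm_smul, Real.norm_eq_abs, abs_of_pos (by linarith : (0:ℝ) < β)]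
    have hlt : Metric.infDist (β • a) (Set.extremePoints ℝ (Metric.closedBall (0 : E) 1))
        < β - 1 := by
      rw [hdist _ hβa, hnorm]
      apply max_lt (by linarith)
      nlinarith
    obtain ⟨e, he, hde⟩ := (Metric.infDist_lt_iff hext).mp hlt
    refine ⟨e, he, (β - 1)⁻¹ • (β • a - e), ?_, ?_⟩
    · rw [norm_smul, Real.norm_eq_abs, abs_of_pos (inv_pos.mpr (by linarith : (0:ℝ) < β - 1))]
      rw [dist_eq_norm] at hde
      rw [inv_mul_lt_iff₀ (by linarith : (0:ℝ) < β - 1), mul_one]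
      exact hde
    · have hkey : (1 - t) * (β - 1)⁻¹ = t := by
        have hne : β - 1 ≠ 0 := by intro h; nlinarith
        field_simp
        nlinarith
      rw [smul_smul, hkey, smul_sub, smul_smul, htinv, one_smul]
      abel
  refine ⟨main, ?_⟩
  set S : Set ℝ := {t : ℝ | t ∈ Set.Ioc (0 : ℝ) 1 ∧
    ∃ e ∈ Set.extremePoints ℝ (Metric.closedBall (0 : E) 1),
      ∃ y : E, ‖y‖ ≤ 1 ∧ a = t • e + (1 - t) • y} with hSdef
  have hmem : ∀ t : ℝ, 0 < t → t < 1 / 2 → t ∈ S := by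
    intro t ht ht2
    obtain ⟨e, he, y, hy, hay⟩ := main t ht ht2
    exact ⟨⟨ht, by linarith⟩, e, he, y, hy.le, hay⟩
  have hbdd : BddAbove S := ⟨1, fun x hx => hx.1.2⟩
  have hne : S.Nonempty := ⟨1/4, hmem _ (by norm_num) (by norm_num)⟩
  have : (1/2 : ℝ) ≤ sSup S := by
    refine le_of_forall_lt fun c hc => ?_
    set t : ℝ := max ((c + 1/2) / 2) (1/4) with htdef
    have ht0 : 0 < t := lt_of_lt_of_le (by norm_num) (le_max_right _ _)
    have ht2 : t < 1/2 := max_lt (by linarith) (by norm_num)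
    have hct : c < t := lt_of_lt_of_le (by linarith) (le_max_left _ _)
    exact lt_of_lt_of_le hct (le_csSup hbdd (hmem t ht0 ht2))
  exact this
end
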